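/- arXiv:2302.02848 — 2 statements merged into one kernel-verified Lean document; each statement's English description precedes it below -/
import Mathlib

section
/- Correctness of the Shift-And algorithm on plain text: let P be a string of length m over alphabet Σ and T a string over Σ. Define the sequence of bit-vectors B_{-1} = 0 and B_i = ((B_{i-1} << 1) + 1) ∧ M[T[i]], where M[c][j] = 1 iff P[j] = c (with the convention that the shift is applied at the end of the previous step, i.e., B_i[j] = (j = 0 ∨ B_{i-1}[j-1] = 1) ∧ (P[j] = T[i])). Then for all i and all 0 ≤ j ≤ m-1, B_i[j] = 1 if and only if T[i-j..i] = P[0..j]. -/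
/-- The Shift-And bit-vectors on plain text:
`B 0 j = (j = 0) ∧ (P j = T 0)` (since `B_{-1} = 0`), and
`B (i+1) j = (j = 0 ∨ B i (j-1)) ∧ (P j = T (i+1))`. -/
def shiftAndText {σ : Type*} [DecidableEq σ] (T P : ℕ → σ) : ℕ → ℕ → Bool
  | 0, j => decide (j = 0) && (P j == T 0)
  | i + 1, j =>
      (decide (j = 0) || (decide (0 < j) && shiftAndText T P i (j - 1))) && (P j == T (i + 1))

/-! For `0 < j ≤ i`, `T[i-j..i] = P[0..j]` holds iff `T[i-j..i-1] = P[0..j-1]` and `T[i] = P[j]`,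
which is exactly the recurrence defining `B_i[j]`; the claim follows by induction on `j`. -/

section

variable {σ : Type*} (T P : ℕ → σ)

/-- `T[i-j..i] = P[0..j]`. -/
def PrefixMatchesAt (i j : ℕ) : Prop :=
  j ≤ i ∧ ∀ k ≤ j, T (i - j + k) = P k

theorem prefixMatchesAt_zero_right_iff (i : ℕ) : PrefixMatchesAt T P i 0 ↔ T i = P 0 := by
  simp [PrefixMatchesAt]

theorem not_prefixMatchesAt_zero_succ (j : ℕ) : ¬ PrefixMatchesAt T P 0 (j + 1) := by
  simp [PrefixMatchesAt]

theorem prefixMatchesAt_succ_succ_iff (i j : ℕ) :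
    PrefixMatchesAt T P (i + 1) (j + 1) ↔ PrefixMatchesAt T P i j ∧ T (i + 1) = P (j + 1) := by
  have hshift : i + 1 - (j + 1) = i - j := by omega
  simp only [PrefixMatchesAt, Nat.succ_le_succ_iff, hshift]
  constructor
  · rintro ⟨hji, hmatch⟩
    refine ⟨⟨hji, fun k hk => hmatch k (by omega)⟩, ?_⟩
    simpa [show i - j + (j + 1) = i + 1 by omega] using hmatch (j + 1) le_rfl
  · rintro ⟨⟨hji, hmatch⟩, hlast⟩
    refine ⟨hji, fun k hk => ?_⟩
    rcases Nat.lt_or_ge k (j + 1) with hk' | hk'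
    · exact hmatch k (by omega)
    · obtain rfl : k = j + 1 := by omega
      rwa [show i - j + (j + 1) = i + 1 by omega]

variable [DecidableEq σ]

theorem shiftAndText_zero_right_iff (i : ℕ) : shiftAndText T P i 0 = true ↔ T i = P 0 := by
  cases i <;> simp [shiftAndText, @eq_comm _ (P 0)]

theorem shiftAndText_zero_succ (j : ℕ) : shiftAndText T P 0 (j + 1) = false := by
  simp [shiftAndText]

theorem shiftAndText_succ_succ (i j : ℕ) :
    shiftAndText T P (i + 1) (j + 1) = (shiftAndText T P i j && P (j + 1) == T (i + 1)) := by
  simp [shiftAndText]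

theorem shiftAndText_iff_prefixMatchesAt (i j : ℕ) :
    shiftAndText T P i j = true ↔ PrefixMatchesAt T P i j := by
  induction j generalizing i with
  | zero => rw [shiftAndText_zero_right_iff, prefixMatchesAt_zero_right_iff]
  | succ j ih =>
    cases i with
    | zero => simpa [shiftAndText_zero_succ] using not_prefixMatchesAt_zero_succ T P j
    | succ i =>
      rw [shiftAndText_succ_succ, prefixMatchesAt_succ_succ_iff, ← ih]
      simp [@eq_comm _ (P (j + 1))]

end

theorem shiftAndText_correct_general {σ : Type*} [DecidableEq σ] (T P : ℕ → σ)
    (i j : ℕ) :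
    shiftAndText T P i j = true ↔ (j ≤ i ∧ ∀ k ≤ j, T (i - j + k) = P k) :=
  shiftAndText_iff_prefixMatchesAt T P i j

/-- Correctness of Shift-And on plain text: for all `i` and all `j < m`,
`B_i[j] = 1` iff `j ≤ i` and `T[i-j..i] = P[0..j]`. -/
theorem shiftAndText_correct {σ : Type*} [DecidableEq σ] (T P : ℕ → σ) (m : ℕ)
    (i j : ℕ) (hj : j < m) :
    shiftAndText T P i j = true ↔ (j ≤ i ∧ ∀ k ≤ j, T (i - j + k) = P k) :=
  shiftAndText_correct_general T P i j
end

section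
/- Generalized Shift-And on DAGs, merging step: if for each in-neighbour v_k of node v_i, bit B_k[j] = 1 iff the pattern prefix P[0..j] matches some path ending at v_k, then the bit-vector D_i defined by D_i[0] = (P[0] = ℓ(v_i)) and, for j ≥ 1, D_i[j] = (P[j] = ℓ(v_i)) ∧ (∃ k ∈ in(v_i), B_k[j-1] = 1), satisfies: D_i[j] = 1 iff there is a path in the graph ending at v_i whose labels spell P[0..j]. -/
/-- `MatchEnd E ℓ P j v` means there is a path in the graph ending at `v`
whose labels spell the prefix `P[0..j]`. -/
inductive MatchEnd {V σ : Type*} (E : V → V → Prop) (ℓ : V → σ) (P : ℕ → σ) : ℕ → V → Prop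
  | zero (v : V) : ℓ v = P 0 → MatchEnd E ℓ P 0 v
  | succ (j : ℕ) (u v : V) : MatchEnd E ℓ P j u → E u v → ℓ v = P (j + 1) →
      MatchEnd E ℓ P (j + 1) v

namespace MatchEnd

variable {V σ : Type*} {E : V → V → Prop} {ℓ : V → σ} {P : ℕ → σ} {v : V}

theorem zero_iff : MatchEnd E ℓ P 0 v ↔ ℓ v = P 0 :=
  ⟨by rintro (⟨_, h⟩ | _); exact h, MatchEnd.zero v⟩

theorem succ_iff {j : ℕ} :
    MatchEnd E ℓ P (j + 1) v ↔ ℓ v = P (j + 1) ∧ ∃ u, E u v ∧ MatchEnd E ℓ P j u := by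
  constructor
  · rintro (_ | ⟨_, u, _, hu, huv, hv⟩)
    exact ⟨hv, u, huv, hu⟩
  · rintro ⟨hv, u, huv, hu⟩
    exact MatchEnd.succ j u v hu huv hv

end MatchEnd

/-- Merging step of generalized Shift-And on graphs: if each in-neighbour `u` of `v`
carries a correct bit-vector `B u`, then the merged vector `D` is correct at `v`. -/
theorem shiftAnd_merge_correct {V σ : Type*} (E : V → V → Prop) (ℓ : V → σ) (P : ℕ → σ)
    (v : V) (B : V → ℕ → Bool) (D : ℕ → Bool)
    (hB : ∀ u, E u v → ∀ j, (B u j = true ↔ MatchEnd E ℓ P j u))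
    (hD0 : D 0 = true ↔ ℓ v = P 0)
    (hDsucc : ∀ j, (D (j + 1) = true ↔ (ℓ v = P (j + 1) ∧ ∃ u, E u v ∧ B u j = true))) :
    ∀ j, D j = true ↔ MatchEnd E ℓ P j v := by
  rintro (_ | j)
  · exact hD0.trans MatchEnd.zero_iff.symm
  · rw [hDsucc, MatchEnd.succ_iff]
    exact and_congr_right fun _ => exists_congr fun u => and_congr_right fun huv => hB u huv j
end
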